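/- arXiv:0906.1825 — 3 statements merged into one kernel-verified Lean document; each statement's English description precedes it below -/
import Mathlib

section
/- (Lemma 3.4, regularized form.) Let λ and μ be partitions and let z₁, z₂ be complex numbers with |z₁| > 1 and 0 < |z₂| < 1. Then both double series below converge absolutely and ∑_{i=1}^{ℓ(λ)} ∑_{j=1}^{∞} (z₁^{λ_i} − 1)·z₁^{1−j}·z₂^{i−μ^t_j} + ∑_{j=1}^{μ_1} ∑_{i=1}^{∞} (z₂^{−μ^t_j} − 1)·z₁^{1−j}·z₂^{i} = ∑_{□∈μ} z₁^{a_λ(□)+1}·z₂^{−l_μ(□)} + ∑_{□∈λ} z₁^{−a_μ(□)}·z₂^{l_λ(□)+1}. (The left-hand side is the regularization of the character ch χ(𝒪,𝒪) − ch χ(I_λ, I_μ) = ∑_{i,j≥1} (z₁^{λ_i−j+1} z₂^{i−μ^t_j} − z₁^{1−j} z₂^{i}).) -/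
/-- A partition: a weakly decreasing sequence of nonnegative integers with
finitely many nonzero terms (encoded as a finitely supported function,
`parts i` being the `(i+1)`-st part). -/
structure Ptn where
  parts : ℕ →₀ ℕ
  antitone' : ∀ ⦃i j : ℕ⦄, i ≤ j → parts j ≤ parts i

namespace Ptn

/-- The size `|μ| = ∑ μ_i`. -/
def size (μ : Ptn) : ℕ := μ.parts.sum fun _ v => v

/-- The diagram of `μ`, as a finset of (0-indexed) cells `(i, j)` with `j < μ.parts i`;
the cell `(i, j)` corresponds to the 1-indexed cell `(i+1, j+1)`. -/
def cells (μ : Ptn) : Finset (ℕ × ℕ) :=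
  (Finset.range (μ.size + 1) ×ˢ Finset.range (μ.size + 1)).filter fun c => c.2 < μ.parts c.1

/-- The transpose partition evaluated at the (0-indexed) column `j`:
`μ.conj j = #{i : μ_i ≥ j+1}`. -/
def conj (μ : Ptn) (j : ℕ) : ℕ :=
  ((Finset.range (μ.size + 1)).filter fun i => j < μ.parts i).card

/-- The number of (nonzero) parts `ℓ(μ)`. -/
def len (μ : Ptn) : ℕ := μ.conj 0

/-- The (generalized, possibly negative) arm length `a_lam(c) = lam_i - j`
of the 0-indexed cell `c = (i₀, j₀)` (1-indexed `(i₀+1, j₀+1)`). -/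
def arm (lam : Ptn) (c : ℕ × ℕ) : ℤ := (lam.parts c.1 : ℤ) - c.2 - 1

/-- The (generalized, possibly negative) leg length `l_mu(c) = muᵗ_j - i`
of the 0-indexed cell `c = (i₀, j₀)`. -/
def leg (mu : Ptn) (c : ℕ × ℕ) : ℤ := (mu.conj c.2 : ℤ) - c.1 - 1

end Ptn

/-!
Write `V_ν(x, y) = ∑_{(i, j) ∈ ν} x ^ j y ^ i` (`Ptn.genFun`), `x = z₁`, `y = z₂`. Both sides equal
`x y V_λ(x, y) + V_μ(x⁻¹, y⁻¹) + (x - 1)(1 - y) V_λ(x, y) V_μ(x⁻¹, y⁻¹)`.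

On the left, the `j`-series of row `i` is `(x ^ λ_i - 1) y ^ (i + 1)` times
`∑_j x⁻ʲ y^(-μᵗ_j)`, a geometric series in `x⁻¹` altered in finitely many terms, and the
`i`-series of column `j` is geometric in `y`; summing them and using
`∑_i (x ^ λ_i - 1) y ^ i = (x - 1) V_λ(x, y)` and `∑_j x ^ j (y ^ μᵗ_j - 1) = (y - 1) V_μ(x, y)`
gives the closed form.

On the right, expanding `x ^ λ_i = 1 + (x - 1) ∑_{k < λ_i} x ^ k` in the first sum and
`x ^ (1 - μ_i) = x - (x - 1) ∑_{j < μ_i} x⁻ʲ` in the second leaves the two linear terms plus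
`(x - 1)` times a difference of two sums over the triples `(i, j, k)` with `(i, j) ∈ μ` and
`(i, k) ∈ λ`. Grouped by the columns `j` of `μ` and `k` of `λ`, the inner sum over
`i < min (λᵗ_k) (μᵗ_j)` collapses to `(1 - y) [λᵗ_k]_y [μᵗ_j]_{y⁻¹}`, which is the product term.
-/

open Finset

namespace Ptn

variable (μ : Ptn)

lemma parts_le_size (i : ℕ) : μ.parts i ≤ μ.size := by
  by_cases h : μ.parts i = 0
  · simp [h]
  · exact single_le_sum (fun _ _ => Nat.zero_le _) (Finsupp.mem_support_iff.2 h)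

lemma lt_size_of_pos {i : ℕ} (h : 0 < μ.parts i) : i < μ.size := by
  have hpos : ∀ a ∈ range (i + 1), 0 < μ.parts a := fun a ha =>
    h.trans_le (μ.antitone' (Nat.lt_succ_iff.1 (mem_range.1 ha)))
  calc i < ∑ _a ∈ range (i + 1), 1 := by simp
    _ ≤ ∑ a ∈ range (i + 1), μ.parts a := sum_le_sum hpos
    _ ≤ μ.size := sum_le_sum_of_subset fun a ha => Finsupp.mem_support_iff.2 (hpos a ha).ne'

lemma lt_conj_iff {i j : ℕ} : i < μ.conj j ↔ j < μ.parts i := by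
  constructor
  · intro h
    by_contra! hji
    have : μ.conj j ≤ i := by
      calc μ.conj j ≤ #(range i) := card_le_card fun a ha => by
            simp only [mem_filter, mem_range] at ha ⊢
            by_contra! hia
            exact (μ.antitone' hia).not_gt (hji.trans_lt ha.2)
        _ = i := card_range i
    omega
  · intro h
    calc i < #(range (i + 1)) := by simp
      _ ≤ μ.conj j := card_le_card fun a ha => by
          have hai := Nat.lt_succ_iff.1 (mem_range.1 ha)
          simp only [mem_filter, mem_range]
          exact ⟨by have := μ.lt_size_of_pos (j.zero_le.trans_lt h); omega,
            h.trans_le (μ.antitone' hai)⟩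

lemma conj_eq_zero {j : ℕ} (h : μ.parts 0 ≤ j) : μ.conj j = 0 := by
  by_contra hc
  exact h.not_gt (μ.lt_conj_iff.1 (Nat.pos_of_ne_zero hc))

lemma mem_cells {c : ℕ × ℕ} : c ∈ μ.cells ↔ c.2 < μ.parts c.1 := by
  simp only [cells, mem_filter, mem_product, mem_range, and_iff_right_iff_imp]
  intro h
  exact ⟨by have := μ.lt_size_of_pos (c.2.zero_le.trans_lt h); omega,
    by have := μ.parts_le_size c.1; omega⟩

lemma sum_cells_eq_sum_rows {M : Type*} [AddCommMonoid M] (f : ℕ × ℕ → M) :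
    ∑ c ∈ μ.cells, f c = ∑ i ∈ range μ.len, ∑ j ∈ range (μ.parts i), f (i, j) :=
  sum_finset_product _ _ _ fun c => by
    simp only [mem_cells, mem_range, len, lt_conj_iff]
    omega

lemma sum_cells_eq_sum_cols {M : Type*} [AddCommMonoid M] (f : ℕ × ℕ → M) :
    ∑ c ∈ μ.cells, f c = ∑ j ∈ range (μ.parts 0), ∑ i ∈ range (μ.conj j), f (i, j) :=
  sum_finset_product_right _ _ _ fun c => by
    simp only [mem_cells, mem_range, lt_conj_iff]
    have := μ.antitone' c.1.zero_le
    omega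

lemma sum_cells_sum_range_parts {M : Type*} [AddCommMonoid M] (ν : Ptn) (F : ℕ → ℕ → ℕ → M) :
    ∑ c ∈ μ.cells, ∑ k ∈ range (ν.parts c.1), F c.1 c.2 k
      = ∑ j ∈ range (μ.parts 0), ∑ k ∈ range (ν.parts 0),
          ∑ i ∈ range (min (μ.conj j) (ν.conj k)), F i j k := by
  rw [sum_cells_eq_sum_cols]
  refine sum_congr rfl fun j _ => sum_comm' fun i k => ?_
  simp only [mem_range, lt_min_iff, lt_conj_iff]
  have := ν.antitone' i.zero_le
  omega

end Ptn

section ZpowSums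

variable {K : Type*} [Field K]

lemma mul_zpow_natCast_add_one (C y : K) (i : ℕ) : C * y ^ ((i : ℤ) + 1) = C * y * y ^ i := by
  rw [← Nat.cast_succ, zpow_natCast, pow_succ]
  ring

lemma sum_range_zpow_add_one_sub (y : K) (T : ℕ) :
    ∑ i ∈ range T, y ^ ((i : ℤ) + 1 - T) = ∑ i ∈ range T, y⁻¹ ^ i := by
  rw [← sum_range_reflect]
  refine sum_congr rfl fun i hi => ?_
  have : ((T - 1 - i : ℕ) : ℤ) + 1 - T = -(i : ℤ) := by
    have := mem_range.1 hi; omega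
  rw [this, zpow_neg, zpow_natCast, inv_pow]

lemma sum_range_zpow_sub (y : K) (L : ℕ) :
    ∑ i ∈ range L, y ^ ((L : ℤ) - i) = y * ∑ i ∈ range L, y ^ i := by
  rw [← sum_range_reflect, mul_sum]
  refine sum_congr rfl fun i hi => ?_
  have : (L : ℤ) - ((L - 1 - i : ℕ) : ℤ) = ((i + 1 : ℕ) : ℤ) := by
    have := mem_range.1 hi; omega
  rw [this, zpow_natCast, pow_succ']

lemma sum_range_min_zpow_sub {y : K} (hy : y ≠ 0) (L T : ℕ) :
    ∑ i ∈ range (min L T), (y ^ ((i : ℤ) + 1 - T) - y ^ ((L : ℤ) - i))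
      = (1 - y) * (∑ i ∈ range L, y ^ i) * ∑ i ∈ range T, y⁻¹ ^ i := by
  rcases le_total L T with h | h
  · rw [min_eq_left h, sum_sub_distrib, sum_range_zpow_sub y]
    have hshift : ∀ i : ℕ, y ^ ((i : ℤ) + 1 - T) = y ^ i * y ^ (1 - (T : ℤ)) := fun i => by
      rw [← zpow_natCast, ← zpow_add₀ hy]; ring_nf
    have hinv : (1 - y) * ∑ i ∈ range T, y⁻¹ ^ i = y ^ (1 - (T : ℤ)) - y := by
      have hcancel : y ^ (1 - (T : ℤ)) * y ^ T = y := by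
        rw [← zpow_natCast, ← zpow_add₀ hy, sub_add_cancel, zpow_one]
      rw [← sum_range_zpow_add_one_sub y, sum_congr rfl fun i _ => hshift i, ← sum_mul]
      linear_combination y ^ (1 - (T : ℤ)) * mul_neg_geom_sum y T - hcancel
    simp only [hshift, ← sum_mul]
    linear_combination -(∑ i ∈ range L, y ^ i) * hinv
  · rw [min_eq_right h, sum_sub_distrib, sum_range_zpow_add_one_sub y]
    have hshift : ∀ i : ℕ, y ^ ((L : ℤ) - i) = y ^ L * y⁻¹ ^ i := fun i => by
      rw [zpow_natCast_sub_natCast₀ hy, inv_pow, div_eq_mul_inv]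
    simp only [hshift, ← mul_sum]
    linear_combination -(∑ i ∈ range T, y⁻¹ ^ i) * mul_neg_geom_sum y L

end ZpowSums

namespace Ptn

variable {K : Type*} [Field K] {x y : K}

def genFun (ν : Ptn) (x y : K) : K := ∑ c ∈ ν.cells, x ^ c.2 * y ^ c.1

lemma genFun_eq_sum_cols (ν : Ptn) (x y : K) :
    ν.genFun x y = ∑ j ∈ range (ν.parts 0), x ^ j * ∑ i ∈ range (ν.conj j), y ^ i := by
  simp only [genFun, ν.sum_cells_eq_sum_cols, mul_sum]

lemma sum_rows_pow_parts_sub_one (ν : Ptn) (x y : K) :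
    ∑ i ∈ range ν.len, (x ^ ν.parts i - 1) * y ^ i = (x - 1) * ν.genFun x y := by
  simp only [genFun, ν.sum_cells_eq_sum_rows, ← mul_geom_sum, mul_sum, sum_mul, mul_assoc]

lemma sum_cols_pow_conj_sub_one (ν : Ptn) (x y : K) :
    ∑ j ∈ range (ν.parts 0), x ^ j * (y ^ ν.conj j - 1) = (y - 1) * ν.genFun x y := by
  simp only [genFun_eq_sum_cols, ← mul_geom_sum, mul_sum]
  refine sum_congr rfl fun j _ => sum_congr rfl fun i _ => by ring

lemma zpow_neg_mul_zpow_sub_conj (μ : Ptn) (hy : y ≠ 0) (C : K) (e : ℤ) (j : ℕ) :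
    C * x ^ (-(j : ℤ)) * y ^ (e - μ.conj j) = C * y ^ e * (x⁻¹ ^ j * y⁻¹ ^ μ.conj j) := by
  rw [zpow_neg, zpow_natCast, zpow_sub₀ hy, zpow_natCast, inv_pow, inv_pow]
  ring

lemma sum_cells_zpow_arm_add_one (lam mu : Ptn) (hx : x ≠ 0) :
    ∑ c ∈ mu.cells, x ^ (lam.arm c + 1) * y ^ (-mu.leg c)
      = mu.genFun x⁻¹ y⁻¹ + (x - 1) * ∑ c ∈ mu.cells, ∑ k ∈ range (lam.parts c.1),
          x ^ k * x⁻¹ ^ c.2 * y ^ ((c.1 : ℤ) + 1 - mu.conj c.2) := by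
  have hcell : ∀ c : ℕ × ℕ, x ^ (lam.arm c + 1) * y ^ (-mu.leg c)
      = x⁻¹ ^ c.2 * y ^ ((c.1 : ℤ) + 1 - mu.conj c.2) + (x - 1) * ∑ k ∈ range (lam.parts c.1),
          x ^ k * x⁻¹ ^ c.2 * y ^ ((c.1 : ℤ) + 1 - mu.conj c.2) := fun c => by
    have harm : lam.arm c + 1 = (lam.parts c.1 : ℤ) - (c.2 : ℕ) := by simp [arm]
    have hleg : -mu.leg c = (c.1 : ℤ) + 1 - mu.conj c.2 := by simp [leg]; ring
    rw [harm, hleg, zpow_natCast_sub_natCast₀ hx, div_eq_mul_inv, ← inv_pow, ← sum_mul,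
      ← sum_mul]
    linear_combination
      -(x⁻¹ ^ c.2 * y ^ ((c.1 : ℤ) + 1 - mu.conj c.2)) * mul_geom_sum x (lam.parts c.1)
  simp only [hcell, sum_add_distrib, ← mul_sum]
  rw [sum_cells_eq_sum_cols, genFun_eq_sum_cols]
  simp only [← mul_sum, sum_range_zpow_add_one_sub]

lemma sum_cells_zpow_neg_arm (lam mu : Ptn) (hx : x ≠ 0) :
    ∑ c ∈ lam.cells, x ^ (-mu.arm c) * y ^ (lam.leg c + 1)
      = x * y * lam.genFun x y - (x - 1) * ∑ c ∈ lam.cells, ∑ j ∈ range (mu.parts c.1),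
          x ^ c.2 * x⁻¹ ^ j * y ^ ((lam.conj c.2 : ℤ) - c.1) := by
  have hcell : ∀ c : ℕ × ℕ, x ^ (-mu.arm c) * y ^ (lam.leg c + 1)
      = x * (x ^ c.2 * y ^ ((lam.conj c.2 : ℤ) - c.1)) - (x - 1) * ∑ j ∈ range (mu.parts c.1),
          x ^ c.2 * x⁻¹ ^ j * y ^ ((lam.conj c.2 : ℤ) - c.1) := fun c => by
    have harm : -mu.arm c = ((c.2 + 1 : ℕ) : ℤ) - (mu.parts c.1 : ℕ) := by simp [arm]; ring
    have hleg : lam.leg c + 1 = (lam.conj c.2 : ℤ) - c.1 := by simp [leg]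
    rw [harm, hleg, zpow_natCast_sub_natCast₀ hx, div_eq_mul_inv, ← inv_pow, ← sum_mul,
      ← mul_sum]
    linear_combination x ^ c.2 * y ^ ((lam.conj c.2 : ℤ) - c.1) *
      (x * mul_neg_geom_sum x⁻¹ (mu.parts c.1)
        + (∑ j ∈ range (mu.parts c.1), x⁻¹ ^ j) * mul_inv_cancel₀ hx)
  simp only [hcell, sum_sub_distrib, ← mul_sum]
  have hleg_sum :
      ∑ c ∈ lam.cells, x ^ c.2 * y ^ ((lam.conj c.2 : ℤ) - c.1) = y * lam.genFun x y := by
    rw [sum_cells_eq_sum_cols, genFun_eq_sum_cols, mul_sum]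
    refine sum_congr rfl fun k _ => ?_
    dsimp only
    rw [← mul_sum, sum_range_zpow_sub]
    ring
  rw [hleg_sum, mul_assoc]

lemma sum_cells_cross_sub (lam mu : Ptn) (hy : y ≠ 0) :
    ∑ c ∈ mu.cells, ∑ k ∈ range (lam.parts c.1),
        x ^ k * x⁻¹ ^ c.2 * y ^ ((c.1 : ℤ) + 1 - mu.conj c.2)
      - ∑ c ∈ lam.cells, ∑ j ∈ range (mu.parts c.1),
          x ^ c.2 * x⁻¹ ^ j * y ^ ((lam.conj c.2 : ℤ) - c.1)
      = (1 - y) * lam.genFun x y * mu.genFun x⁻¹ y⁻¹ := by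
  rw [mu.sum_cells_sum_range_parts lam
      fun i j k => x ^ k * x⁻¹ ^ j * y ^ ((i : ℤ) + 1 - mu.conj j),
    lam.sum_cells_sum_range_parts mu
      fun i k j => x ^ k * x⁻¹ ^ j * y ^ ((lam.conj k : ℤ) - i),
    sum_comm, ← sum_sub_distrib, genFun_eq_sum_cols, genFun_eq_sum_cols, mul_assoc, sum_mul_sum,
    mul_sum]
  refine sum_congr rfl fun k _ => ?_
  rw [← sum_sub_distrib, mul_sum]
  refine sum_congr rfl fun j _ => ?_
  rw [min_comm, ← mul_sum, ← mul_sum, ← mul_sub, ← sum_sub_distrib, sum_range_min_zpow_sub hy]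
  ring

theorem sum_cells_arm_leg (lam mu : Ptn) (hx : x ≠ 0) (hy : y ≠ 0) :
    ∑ c ∈ mu.cells, x ^ (lam.arm c + 1) * y ^ (-mu.leg c)
        + ∑ c ∈ lam.cells, x ^ (-mu.arm c) * y ^ (lam.leg c + 1)
      = x * y * lam.genFun x y + mu.genFun x⁻¹ y⁻¹
        + (x - 1) * (1 - y) * lam.genFun x y * mu.genFun x⁻¹ y⁻¹ := by
  rw [sum_cells_zpow_arm_add_one lam mu hx, sum_cells_zpow_neg_arm lam mu hx]
  linear_combination (x - 1) * sum_cells_cross_sub lam mu hy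

lemma sum_row_tsums_add_sum_col_tsums (lam mu : Ptn) (hx : x ≠ 0) (hx1 : x ≠ 1) (hy : y ≠ 0)
    (hy1 : y ≠ 1) :
    ∑ i ∈ range lam.len, (x ^ (lam.parts i : ℤ) - 1) * y ^ ((i : ℤ) + 1)
        * ((1 - x⁻¹)⁻¹ + ∑ j ∈ range (mu.parts 0), x⁻¹ ^ j * (y⁻¹ ^ mu.conj j - 1))
      + ∑ j ∈ range (mu.parts 0), (y ^ (-(mu.conj j : ℤ)) - 1) * x ^ (-(j : ℤ)) * y * (1 - y)⁻¹
      = x * y * lam.genFun x y + mu.genFun x⁻¹ y⁻¹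
        + (x - 1) * (1 - y) * lam.genFun x y * mu.genFun x⁻¹ y⁻¹ := by
  have hrows : ∑ i ∈ range lam.len, (x ^ (lam.parts i : ℤ) - 1) * y ^ ((i : ℤ) + 1)
      = y * ((x - 1) * lam.genFun x y) := by
    rw [← sum_rows_pow_parts_sub_one, mul_sum]
    refine sum_congr rfl fun i _ => ?_
    rw [zpow_natCast, mul_zpow_natCast_add_one]
    ring
  have hcols : ∑ j ∈ range (mu.parts 0), (y ^ (-(mu.conj j : ℤ)) - 1) * x ^ (-(j : ℤ))
      = (y⁻¹ - 1) * mu.genFun x⁻¹ y⁻¹ := by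
    rw [← sum_cols_pow_conj_sub_one]
    refine sum_congr rfl fun j _ => ?_
    simp only [zpow_neg, zpow_natCast, inv_pow]
    ring
  rw [← sum_mul, hrows, ← sum_mul, ← sum_mul, hcols, sum_cols_pow_conj_sub_one]
  have : x - 1 ≠ 0 := sub_ne_zero.2 hx1
  have : 1 - y ≠ 0 := sub_ne_zero.2 hy1.symm
  field_simp
  ring

end Ptn

section Analytic

variable {𝕜 : Type*} [NormedField 𝕜]

lemma hasSum_geometric_mul_of_eq_one {r : 𝕜} (hr : ‖r‖ < 1) {w : ℕ → 𝕜} {m : ℕ}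
    (hw : ∀ j, m ≤ j → w j = 1) :
    HasSum (fun j => r ^ j * w j) ((1 - r)⁻¹ + ∑ j ∈ range m, r ^ j * (w j - 1)) := by
  convert (hasSum_geometric_of_norm_lt_one hr).add
    (hasSum_sum_of_ne_finset_zero fun j hj => ?_) using 1
  · ext j; ring
  · simp [hw j (by simpa using hj)]

lemma summable_norm_geometric_mul_of_eq_one {r : 𝕜} (hr : ‖r‖ < 1) {w : ℕ → 𝕜} {m : ℕ}
    (hw : ∀ j, m ≤ j → w j = 1) :
    Summable fun j => ‖r ^ j * w j‖ := by
  have h := hasSum_geometric_mul_of_eq_one (r := ‖r‖) (by simpa using hr) (w := fun j => ‖w j‖)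
    (m := m) fun j hj => by simp [hw j hj]
  simpa [norm_mul, norm_pow] using h.summable

namespace Ptn

variable (μ : Ptn) {x y : 𝕜}

lemma hasSum_zpow_neg_mul_zpow_sub_conj (hx : ‖x⁻¹‖ < 1) (hy : y ≠ 0) (C : 𝕜) (e : ℤ) :
    HasSum (fun j : ℕ => C * x ^ (-(j : ℤ)) * y ^ (e - μ.conj j))
      (C * y ^ e * ((1 - x⁻¹)⁻¹ + ∑ j ∈ range (μ.parts 0), x⁻¹ ^ j * (y⁻¹ ^ μ.conj j - 1))) := by
  simp only [μ.zpow_neg_mul_zpow_sub_conj hy]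
  exact (hasSum_geometric_mul_of_eq_one hx (w := fun j => y⁻¹ ^ μ.conj j) (m := μ.parts 0)
    fun j hj => by simp [μ.conj_eq_zero hj]).mul_left (C * y ^ e)

lemma summable_norm_zpow_neg_mul_zpow_sub_conj (hx : ‖x⁻¹‖ < 1) (hy : y ≠ 0) (C : 𝕜) (e : ℤ) :
    Summable fun j : ℕ => ‖C * x ^ (-(j : ℤ)) * y ^ (e - μ.conj j)‖ := by
  simp only [μ.zpow_neg_mul_zpow_sub_conj hy, norm_mul (C * y ^ e)]
  exact (summable_norm_geometric_mul_of_eq_one hx (w := fun j => y⁻¹ ^ μ.conj j)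
    (m := μ.parts 0) fun j hj => by simp [μ.conj_eq_zero hj]).mul_left _

end Ptn

lemma hasSum_mul_zpow_add_one {y : 𝕜} (hy : ‖y‖ < 1) (C : 𝕜) :
    HasSum (fun i : ℕ => C * y ^ ((i : ℤ) + 1)) (C * y * (1 - y)⁻¹) := by
  simp only [mul_zpow_natCast_add_one]
  exact (hasSum_geometric_of_norm_lt_one hy).mul_left _

lemma summable_norm_mul_zpow_add_one {y : 𝕜} (hy : ‖y‖ < 1) (C : 𝕜) :
    Summable fun i : ℕ => ‖C * y ^ ((i : ℤ) + 1)‖ := by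
  simp only [mul_zpow_natCast_add_one, norm_mul, norm_pow]
  exact (summable_geometric_of_lt_one (norm_nonneg _) hy).mul_left _

end Analytic

/-- Indices are 0-indexed: the 1-indexed row `i`
is `i₀ + 1` and the 1-indexed column `j` is `j₀ + 1`, so e.g.
`z₁^{1-j} = z₁^{-j₀}` and `z₂^{i - μᵗ_j} = z₂^{(i₀+1) - μ.conj j₀}`. -/
theorem stmt1 (lam mu : Ptn) (z₁ z₂ : ℂ) (h1 : 1 < ‖z₁‖) (h2 : 0 < ‖z₂‖) (h2' : ‖z₂‖ < 1) :
    (∀ i ∈ Finset.range lam.len,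
        Summable fun j : ℕ =>
          ‖(z₁ ^ (lam.parts i : ℤ) - 1) * z₁ ^ (-(j : ℤ)) * z₂ ^ ((i : ℤ) + 1 - mu.conj j)‖)
    ∧ (∀ j ∈ Finset.range (mu.parts 0),
        Summable fun i : ℕ =>
          ‖(z₂ ^ (-(mu.conj j : ℤ)) - 1) * z₁ ^ (-(j : ℤ)) * z₂ ^ ((i : ℤ) + 1)‖)
    ∧ (∑ i ∈ Finset.range lam.len, ∑' j : ℕ,
          (z₁ ^ (lam.parts i : ℤ) - 1) * z₁ ^ (-(j : ℤ)) * z₂ ^ ((i : ℤ) + 1 - mu.conj j))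
        + (∑ j ∈ Finset.range (mu.parts 0), ∑' i : ℕ,
            (z₂ ^ (-(mu.conj j : ℤ)) - 1) * z₁ ^ (-(j : ℤ)) * z₂ ^ ((i : ℤ) + 1))
      = (∑ c ∈ mu.cells, z₁ ^ (lam.arm c + 1) * z₂ ^ (-(mu.leg c)))
        + (∑ c ∈ lam.cells, z₁ ^ (-(mu.arm c)) * z₂ ^ (lam.leg c + 1)) := by
  have hx : z₁ ≠ 0 := norm_pos_iff.1 (one_pos.trans h1)
  have hx1 : z₁ ≠ 1 := by rintro rfl; simp at h1
  have hy : z₂ ≠ 0 := norm_pos_iff.1 h2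
  have hy1 : z₂ ≠ 1 := by rintro rfl; simp at h2'
  have hx' : ‖z₁⁻¹‖ < 1 := by rw [norm_inv]; exact inv_lt_one_of_one_lt₀ h1
  refine ⟨fun i _ => mu.summable_norm_zpow_neg_mul_zpow_sub_conj hx' hy _ _,
    fun j _ => summable_norm_mul_zpow_add_one h2' _, ?_⟩
  rw [sum_congr rfl fun i _ => (mu.hasSum_zpow_neg_mul_zpow_sub_conj hx' hy _ _).tsum_eq,
    sum_congr rfl fun j _ => (hasSum_mul_zpow_add_one h2' _).tsum_eq,
    Ptn.sum_cells_arm_leg lam mu hx hy]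
  exact Ptn.sum_row_tsums_add_sum_col_tsums lam mu hx hx1 hy hy1
end

section
/- (Lemma 3.6, the matrix element identity for a column and a row, as a polynomial identity.) For all complex numbers m, t₁, t₂ and all integers k, l ≥ 1: ∏_{j=0}^{k−1} (m − j·t₂) · ∏_{j=0}^{l−1} (m + t₁ + t₂ + j·t₁) + k·l·t₁·t₂ · ∏_{j=0}^{k−2} (m − j·t₂) · ∏_{j=0}^{l−2} (m + t₁ + t₂ + j·t₁) = (m + l·t₁ − (k−1)·t₂) · ∏_{j=0}^{k−2} (m − j·t₂) · ∏_{j=0}^{l−1} (m + t₂ + j·t₁), where a product over an empty index range equals 1. (The right-hand side equals ∏_{□∈(1^k)} (m + t₁·a_{(l)}(□) + t₁ − t₂·l_{(1^k)}(□)) · ∏_{□∈(l)} (m − t₁·a_{(1^k)}(□) + t₂·l_{(l)}(□) + t₂), the predicted matrix element of the vertex operator between the column partition (1^k) and the row partition (l).) -/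
/-!
Write `A = ∏_{j<k-1} (m - j t₂)` and `B = ∏_{j<l-1} (m + t₁ + t₂ + j t₁)`. Peeling off the last
factor of the two long products on the left and the first factor `m + t₂` of the product on the
right, both sides become `A B` times a quadratic in `m`, and the two quadratics agree:
`(m - (k-1) t₂)(m + l t₁ + t₂) + k l t₁ t₂ = (m + l t₁ - (k-1) t₂)(m + t₂)`.
-/

open Finset

theorem prod_range_succ_add_mul {R : Type*} [CommRing R] (a d : R) (n : ℕ) :
    ∏ j ∈ range (n + 1), (a + (j : R) * d) = a * ∏ j ∈ range n, (a + d + (j : R) * d) := by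
  rw [prod_range_succ', mul_comm]
  congr 1
  · simp
  · refine prod_congr rfl fun j _ => ?_
    push_cast
    ring

/-- Lemma 3.6 as a polynomial identity: for all `m, t₁, t₂ ∈ ℂ` and integers `k, l ≥ 1`,
`∏_{j=0}^{k-1}(m - j t₂) · ∏_{j=0}^{l-1}(m + t₁ + t₂ + j t₁)
 + k·l·t₁·t₂ · ∏_{j=0}^{k-2}(m - j t₂) · ∏_{j=0}^{l-2}(m + t₁ + t₂ + j t₁)
 = (m + l t₁ - (k-1) t₂) · ∏_{j=0}^{k-2}(m - j t₂) · ∏_{j=0}^{l-1}(m + t₂ + j t₁)`. -/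
theorem stmt3 (m t₁ t₂ : ℂ) (k l : ℕ) (hk : 1 ≤ k) (hl : 1 ≤ l) :
    (∏ j ∈ Finset.range k, (m - (j : ℂ) * t₂)) *
        (∏ j ∈ Finset.range l, (m + t₁ + t₂ + (j : ℂ) * t₁))
      + (k : ℂ) * (l : ℂ) * t₁ * t₂ *
          (∏ j ∈ Finset.range (k - 1), (m - (j : ℂ) * t₂)) *
          (∏ j ∈ Finset.range (l - 1), (m + t₁ + t₂ + (j : ℂ) * t₁))
      = (m + (l : ℂ) * t₁ - ((k : ℂ) - 1) * t₂) *
          (∏ j ∈ Finset.range (k - 1), (m - (j : ℂ) * t₂)) *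
          (∏ j ∈ Finset.range l, (m + t₂ + (j : ℂ) * t₁)) := by
  obtain ⟨k, rfl⟩ : ∃ k', k = k' + 1 := ⟨k - 1, by omega⟩
  obtain ⟨l, rfl⟩ : ∃ l', l = l' + 1 := ⟨l - 1, by omega⟩
  have peel_first : ∏ j ∈ range (l + 1), (m + t₂ + (j : ℂ) * t₁)
      = (m + t₂) * ∏ j ∈ range l, (m + t₁ + t₂ + (j : ℂ) * t₁) := by
    simp only [prod_range_succ_add_mul, add_right_comm m t₂ t₁]
  have quadratic : (m - k * t₂) * (m + t₁ + t₂ + l * t₁) + (k + 1) * (l + 1) * t₁ * t₂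
      = (m + (l + 1) * t₁ - k * t₂) * (m + t₂) := by ring
  rw [prod_range_succ, prod_range_succ, peel_first, Nat.add_sub_cancel, Nat.add_sub_cancel]
  push_cast
  linear_combination (∏ j ∈ range k, (m - (j : ℂ) * t₂)) *
    (∏ j ∈ range l, (m + t₁ + t₂ + (j : ℂ) * t₁)) * quadratic
end

section
/- (Existence, uniqueness, and bijectivity of the blended partition, Section 5.3.) Fix an integer r ≥ 1. For a partition ν let B(ν) = {ν_j − j + 1 : j ≥ 1} ⊆ ℤ be its β-set. Let b₁, …, b_r be integers with b₁ + ⋯ + b_r = 0 and let μ^{[1]}, …, μ^{[r]} be partitions. Then the sets S_i = {r·(μ^{[i]}_j − j + b_i) + i : j ≥ 1}, for i = 1, …, r, are pairwise disjoint, and there exists a unique partition μ = bl(b₁,…,b_r; μ^{[1]},…,μ^{[r]}) with B(μ) = S₁ ⊔ ⋯ ⊔ S_r. Moreover, the resulting map from the set of tuples (b₁,…,b_r; μ^{[1]},…,μ^{[r]}) with ∑ b_i = 0 to the set of all partitions is a bijection. -/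
namespace Ptn

/-- The β-set `B(ν) = {ν_j - j + 1 : j ≥ 1}` (0-indexed: `{ν.parts j - j : j ≥ 0}`). -/
def betaSet (ν : Ptn) : Set ℤ := Set.range fun j : ℕ => (ν.parts j : ℤ) - j

end Ptn

/-- The `i`-th shifted-and-dilated β-set
`S_i = {r·(μ^{[i]}_j - j + b_i) + i : j ≥ 1}` (with `i : Fin r` denoting the
1-indexed label `i + 1`, and `j` 0-indexed so that the 1-indexed `j` is `j + 1`). -/
def blendSet (r : ℕ) (b : Fin r → ℤ) (μs : Fin r → Ptn) (i : Fin r) : Set ℤ :=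
  Set.range fun j : ℕ =>
    (r : ℤ) * (((μs i).parts j : ℤ) - ((j : ℤ) + 1) + b i) + ((i : ℕ) + 1)

/-!
A partition `ν` together with an integer `c` gives the Maya diagram `{ν_j - j + c}`
(`Ptn.beta`): a set of integers that is bounded above and contains every sufficiently negative
integer. Every Maya diagram arises from exactly one pair `(ν, c)`, and the charge `c` is recovered
by counting: if all integers `≤ m` lie in the diagram, exactly `c - m` of its elements exceed `m`.

Since `(i, q) ↦ r q + i + 1` is a bijection `Fin r × ℤ → ℤ`, a set of integers is the same
thing as the `r`-tuple of its fibres, and it is a Maya diagram iff all fibres are. Counting above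
`r m + r` shows that its charge is the sum of the charges of the fibres plus `r`. The fibres of
`⋃ S_i` have charges `b_i - 1`, so the union has charge `0`, i.e. is a β-set, iff `∑ b_i = 0`.
-/

open Set

namespace Ptn

lemma ext {ν ν' : Ptn} (h : ν.parts = ν'.parts) : ν = ν' := by
  cases ν
  cases ν'
  congr

def beta (ν : Ptn) (c : ℤ) (j : ℕ) : ℤ := ν.parts j - j + c

lemma betaSet_eq_range_beta (ν : Ptn) : ν.betaSet = range (ν.beta 0) := by
  ext
  simp [betaSet, beta]

lemma beta_strictAnti (ν : Ptn) (c : ℤ) : StrictAnti (ν.beta c) :=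
  strictAnti_nat_of_succ_lt fun j => by
    have := ν.antitone' (Nat.le_add_right j 1)
    simp only [beta]
    omega

lemma exists_beta_eq_sub (ν : Ptn) (c : ℤ) :
    ∃ N : ℕ, ∀ j, N ≤ j → ν.beta c j = c - j := by
  obtain ⟨N, hN⟩ := ν.parts.support.exists_nat_subset_range
  refine ⟨N, fun j hj => ?_⟩
  have : ν.parts j = 0 := Finsupp.notMem_support_iff.mp fun h => by
    simpa using (Finset.mem_range.mp (hN h)).trans_le hj
  simp [beta, this]
  ring

lemma range_beta_inj {ν ν' : Ptn} {c c' : ℤ} (h : range (ν.beta c) = range (ν'.beta c')) :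
    ν = ν' ∧ c = c' := by
  have hfun : ν.beta c = ν'.beta c' :=
    (StrictMono.range_inj (γ := ℤᵒᵈ) (ν.beta_strictAnti c) (ν'.beta_strictAnti c')).1 h
  obtain ⟨N, hN⟩ := ν.exists_beta_eq_sub c
  obtain ⟨N', hN'⟩ := ν'.exists_beta_eq_sub c'
  have hc : c = c' := by
    have := congrFun hfun (max N N')
    rw [hN _ (le_max_left _ _), hN' _ (le_max_right _ _)] at this
    omega
  refine ⟨Ptn.ext (Finsupp.ext fun j => ?_), hc⟩
  have := congrFun hfun j
  simp only [beta] at this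
  omega

end Ptn

lemma StrictAnti.antitone_add_id {f : ℕ → ℤ} (hf : StrictAnti f) :
    Antitone fun j => f j + j :=
  antitone_nat_of_succ_le fun j => by
    have := hf (Nat.lt_add_one j)
    push_cast
    omega

lemma StrictAnti.apply_add_eq_sub {f : ℕ → ℤ} (hf : StrictAnti f) {k : ℕ}
    (hk : Iic (f k) ⊆ range f) (t : ℕ) : f (k + t) = f k - t := by
  induction t with
  | zero => simp
  | succ t ih =>
    obtain ⟨l, hl⟩ := hk (show f k - (t + 1) ≤ f k by omega)
    have hlt : k + t < l := by
      by_contra! hle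
      have := hf.antitone hle
      omega
    have h1 := hf.antitone (show k + (t + 1) ≤ l by omega)
    have h2 := hf (show k + t < k + (t + 1) by omega)
    push_cast
    omega

lemma exists_ptn_beta_eq {f : ℕ → ℤ} (hf : StrictAnti f) {N : ℕ} {c : ℤ}
    (hN : ∀ j, N ≤ j → f j = c - j) : ∃ ν : Ptn, ν.beta c = f := by
  have hge (j : ℕ) : c ≤ f j + j := by
    have : f (max j N) + (max j N : ℕ) ≤ f j + j := hf.antitone_add_id (le_max_left j N)
    rw [hN _ (le_max_right j N)] at this
    omega
  let parts : ℕ →₀ ℕ := Finsupp.onFinset (Finset.range N) (fun j => (f j + j - c).toNat)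
    fun j hj => Finset.mem_range.mpr (by
      by_contra hjN
      exact hj (by simp [hN j (by omega)]))
  refine ⟨⟨parts, fun i j hij => ?_⟩, funext fun j => ?_⟩
  · have : f j + j ≤ f i + i := hf.antitone_add_id hij
    simp only [parts, Finsupp.onFinset_apply]
    omega
  · have := hge j
    simp only [Ptn.beta, parts, Finsupp.onFinset_apply]
    omega

lemma exists_strictAnti_range_eq {S : Set ℤ} (hS : BddAbove S) (hinf : S.Infinite) :
    ∃ f : ℕ → ℤ, StrictAnti f ∧ range f = S := by
  obtain ⟨M, hM⟩ := hS
  let p : ℕ → Prop := fun n => M - n ∈ S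
  have hST : S ⊆ (fun n : ℕ => M - n) '' Set.ofPred p := fun z hz =>
    ⟨(M - z).toNat, by simp [p, Int.toNat_of_nonneg (sub_nonneg.mpr (hM hz)), hz]⟩
  have hT : (Set.ofPred p).Infinite := fun hfin => hinf ((hfin.image _).subset hST)
  refine ⟨fun n => M - Nat.nth p n, fun a b hab => ?_, ?_⟩
  · exact sub_lt_sub_left (by exact_mod_cast Nat.nth_strictMono hT hab) M
  · rw [range_comp' (fun n : ℕ => M - n), Nat.range_nth_of_infinite hT]
    exact hST.antisymm' (image_subset_iff.mpr fun n hn => hn)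

def IsMayaDiagram (S : Set ℤ) : Prop := BddAbove S ∧ ∃ m, Iic m ⊆ S

lemma IsMayaDiagram.exists_range_beta_eq {S : Set ℤ} (hS : IsMayaDiagram S) :
    ∃ (ν : Ptn) (c : ℤ), range (ν.beta c) = S := by
  obtain ⟨hbdd, m, hm⟩ := hS
  obtain ⟨f, hf, rfl⟩ := exists_strictAnti_range_eq hbdd ((Iic_infinite m).mono hm)
  obtain ⟨K, rfl⟩ := hm (mem_Iic.mpr le_rfl)
  obtain ⟨ν, hν⟩ := exists_ptn_beta_eq hf (N := K) (c := f K + K) fun j hj => by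
    rw [← Nat.add_sub_cancel' hj, hf.apply_add_eq_sub hm]
    push_cast
    ring
  exact ⟨ν, _, congrArg range hν⟩

namespace Ptn

lemma isMayaDiagram_range_beta (ν : Ptn) (c : ℤ) : IsMayaDiagram (range (ν.beta c)) := by
  obtain ⟨N, hN⟩ := ν.exists_beta_eq_sub c
  refine ⟨⟨ν.beta c 0, ?_⟩, c - N, fun z hz => ⟨(c - z).toNat, ?_⟩⟩
  · rintro _ ⟨j, rfl⟩
    exact (ν.beta_strictAnti c).antitone j.zero_le
  · rw [mem_Iic] at hz
    rw [hN _ (by omega)]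
    omega

lemma isMayaDiagram_betaSet (ν : Ptn) : IsMayaDiagram ν.betaSet :=
  ν.betaSet_eq_range_beta ▸ ν.isMayaDiagram_range_beta 0

lemma ncard_range_beta_inter_Ioi {ν : Ptn} {c m : ℤ} (hm : Iic m ⊆ range (ν.beta c)) :
    ((range (ν.beta c) ∩ Ioi m).ncard : ℤ) = c - m := by
  have hf := ν.beta_strictAnti c
  obtain ⟨K, hK⟩ := hm (mem_Iic.mpr le_rfl)
  subst hK
  have hinter : range (ν.beta c) ∩ Ioi (ν.beta c K) = ν.beta c '' Iio K := by
    ext z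
    constructor
    · rintro ⟨⟨j, rfl⟩, hj⟩
      exact ⟨j, hf.lt_iff_gt.mp hj, rfl⟩
    · rintro ⟨j, hj, rfl⟩
      exact ⟨⟨j, rfl⟩, hf hj⟩
  obtain ⟨N, hN⟩ := ν.exists_beta_eq_sub c
  have := hf.apply_add_eq_sub hm N
  rw [hN _ (by omega)] at this
  rw [hinter, ncard_image_of_injective _ hf.injective, ← Finset.coe_range, ncard_coe_finset,
    Finset.card_range]
  push_cast at this
  omega

end Ptn

def blendMap (r : ℕ) (i : Fin r) (q : ℤ) : ℤ := (r : ℤ) * q + ((i : ℕ) + 1)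

section blendMap

variable {r : ℕ}

lemma blendMap_inj {i i' : Fin r} {q q' : ℤ} :
    blendMap r i q = blendMap r i' q' ↔ i = i' ∧ q = q' := by
  refine ⟨fun h => ?_, fun ⟨hi, hq⟩ => hi ▸ hq ▸ rfl⟩
  have hr : (0 : ℤ) < r := by exact_mod_cast i.pos
  have hi := i.isLt
  have hi' := i'.isLt
  simp only [blendMap] at h
  have hqq' : q = q' := by
    by_contra hne
    rcases lt_or_gt_of_ne hne with hlt | hlt <;> nlinarith
  subst hqq'
  exact ⟨Fin.ext (by omega), rfl⟩

lemma blendMap_injective (i : Fin r) : Function.Injective (blendMap r i) :=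
  fun _ _ h => (blendMap_inj.mp h).2

lemma exists_blendMap_eq (hr : 0 < r) (z : ℤ) : ∃ i q, blendMap r i q = z := by
  have hr' : (0 : ℤ) < r := by exact_mod_cast hr
  have h1 := Int.emod_nonneg (z - 1) hr'.ne'
  have h2 := Int.emod_lt_of_pos (z - 1) hr'
  refine ⟨⟨((z - 1) % r).toNat, by omega⟩, (z - 1) / r, ?_⟩
  have := Int.mul_ediv_add_emod (z - 1) r
  simp only [blendMap, Int.toNat_of_nonneg h1]
  omega

lemma blendMap_le_iff {i : Fin r} {q m : ℤ} : blendMap r i q ≤ r * m + r ↔ q ≤ m := by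
  have hr : (0 : ℤ) < r := by exact_mod_cast i.pos
  have hi := i.isLt
  simp only [blendMap]
  constructor
  · intro h
    by_contra! hlt
    nlinarith
  · intro h
    nlinarith

lemma blendSet_eq_image (b : Fin r → ℤ) (μs : Fin r → Ptn) (i : Fin r) :
    blendSet r b μs i = blendMap r i '' range ((μs i).beta (b i - 1)) := by
  rw [blendSet, ← range_comp]
  congr 1
  funext j
  simp only [Function.comp_apply, blendMap, Ptn.beta]
  ring

lemma disjoint_image_blendMap {i i' : Fin r} (h : i ≠ i') (U U' : Set ℤ) :
    Disjoint (blendMap r i '' U) (blendMap r i' '' U') := by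
  rw [disjoint_left]
  rintro _ ⟨q, -, rfl⟩ ⟨q', -, hq'⟩
  exact h (blendMap_inj.mp hq').1.symm

lemma eq_iUnion_image_blendMap_iff (hr : 0 < r) {S : Set ℤ} {U : Fin r → Set ℤ} :
    S = ⋃ i, blendMap r i '' U i ↔ ∀ i, blendMap r i ⁻¹' S = U i := by
  constructor
  · rintro rfl i
    ext q
    simp only [mem_preimage, mem_iUnion, mem_image, blendMap_inj]
    constructor
    · rintro ⟨i', q', hq', rfl, rfl⟩
      exact hq'
    · exact fun hq => ⟨i, q, hq, rfl, rfl⟩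
  · intro h
    ext z
    obtain ⟨i, q, rfl⟩ := exists_blendMap_eq hr z
    simp only [mem_iUnion, mem_image, blendMap_inj]
    constructor
    · exact fun hz => ⟨i, q, h i ▸ hz, rfl, rfl⟩
    · rintro ⟨i', q', hq', rfl, rfl⟩
      rwa [← h i'] at hq'

lemma Iic_subset_iUnion_image_blendMap (hr : 0 < r) {U : Fin r → Set ℤ} {m : ℤ}
    (hm : ∀ i, Iic m ⊆ U i) : Iic (r * m + r) ⊆ ⋃ i, blendMap r i '' U i := by
  intro z hz
  obtain ⟨i, q, rfl⟩ := exists_blendMap_eq hr z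
  exact mem_iUnion.mpr ⟨i, q, hm i (blendMap_le_iff.mp hz), rfl⟩

lemma iUnion_image_blendMap_inter_Ioi (U : Fin r → Set ℤ) (m : ℤ) :
    (⋃ i, blendMap r i '' U i) ∩ Ioi (r * m + r) = ⋃ i, blendMap r i '' (U i ∩ Ioi m) := by
  ext z
  simp only [mem_inter_iff, mem_iUnion, mem_image, mem_Ioi]
  constructor
  · rintro ⟨⟨i, q, hq, rfl⟩, hz⟩
    exact ⟨i, q, ⟨hq, not_le.mp (mt blendMap_le_iff.mpr (not_le.mpr hz))⟩, rfl⟩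
  · rintro ⟨i, q, ⟨hq, hqm⟩, rfl⟩
    exact ⟨⟨i, q, hq, rfl⟩, not_le.mp (mt blendMap_le_iff.mp (not_le.mpr hqm))⟩

lemma IsMayaDiagram.exists_Iic_subset_forall {ι : Type*} [Finite ι] {U : ι → Set ℤ}
    (hU : ∀ i, IsMayaDiagram (U i)) : ∃ m, ∀ i, Iic m ⊆ U i := by
  choose m hm using fun i => (hU i).2
  obtain ⟨m₀, hm₀⟩ := Finite.exists_ge m
  exact ⟨m₀, fun i => (Iic_subset_Iic.mpr (hm₀ i)).trans (hm i)⟩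

lemma IsMayaDiagram.iUnion_image_blendMap (hr : 0 < r) {U : Fin r → Set ℤ}
    (hU : ∀ i, IsMayaDiagram (U i)) : IsMayaDiagram (⋃ i, blendMap r i '' U i) := by
  obtain ⟨m, hm⟩ := IsMayaDiagram.exists_Iic_subset_forall hU
  have hmono (i : Fin r) : Monotone (blendMap r i) := fun q q' h => by
    simp only [blendMap]
    gcongr
  have hbdd := (finite_univ (α := Fin r)).bddAbove_biUnion.mpr
    fun i _ => (hmono i).map_bddAbove (hU i).1
  rw [biUnion_univ] at hbdd
  exact ⟨hbdd, _, Iic_subset_iUnion_image_blendMap hr hm⟩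

lemma IsMayaDiagram.preimage_blendMap {S : Set ℤ} (hS : IsMayaDiagram S) (i : Fin r) :
    IsMayaDiagram (blendMap r i ⁻¹' S) := by
  obtain ⟨⟨M, hM⟩, m, hm⟩ := hS
  have hr : (1 : ℤ) ≤ r := by exact_mod_cast i.pos
  have hi := i.isLt
  refine ⟨⟨max M 0, fun q hq => ?_⟩, min m 0 - 1, fun q hq => hm ?_⟩
  · have := hM hq
    simp only [blendMap] at this
    rcases le_or_gt q 0 with h | h
    · exact le_max_of_le_right h
    · exact le_max_of_le_left (by nlinarith)
  · simp only [mem_Iic, blendMap] at hq ⊢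
    have : q + 1 ≤ 0 := by omega
    nlinarith [min_le_left m 0]

theorem charge_iUnion_image_blendMap (hr : 0 < r) {ν : Ptn} {μ : Fin r → Ptn} {c₀ : ℤ}
    {c : Fin r → ℤ}
    (h : range (ν.beta c₀) = ⋃ i, blendMap r i '' range ((μ i).beta (c i))) :
    c₀ = ∑ i, c i + r := by
  obtain ⟨m, hm⟩ := IsMayaDiagram.exists_Iic_subset_forall
    fun i => (μ i).isMayaDiagram_range_beta (c i)
  have hfin (i : Fin r) : (blendMap r i '' (range ((μ i).beta (c i)) ∩ Ioi m)).Finite :=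
    (BddBelow.finite_of_bddAbove (bddBelow_Ioi.mono inter_subset_right)
      (((μ i).isMayaDiagram_range_beta (c i)).1.mono inter_subset_left)).image _
  have hcard : ((⋃ i, blendMap r i '' (range ((μ i).beta (c i)) ∩ Ioi m)).ncard : ℤ) =
      ∑ i, (c i - m) := by
    rw [ncard_iUnion_of_finite hfin fun i i' h => disjoint_image_blendMap h _ _,
      finsum_eq_sum_of_fintype, Nat.cast_sum]
    refine Finset.sum_congr rfl fun i _ => ?_
    rw [ncard_image_of_injective _ (blendMap_injective i), Ptn.ncard_range_beta_inter_Ioi (hm i)]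
  have hcount := Ptn.ncard_range_beta_inter_Ioi (h ▸ Iic_subset_iUnion_image_blendMap hr hm)
  rw [h, iUnion_image_blendMap_inter_Ioi, hcard, Finset.sum_sub_distrib] at hcount
  simp only [Finset.sum_const, Finset.card_univ, Fintype.card_fin, nsmul_eq_mul] at hcount
  linarith

end blendMap

/-- Existence, uniqueness and bijectivity of the blended partition: for integers
`b₁ + ⋯ + b_r = 0` and partitions `μ^{[1]}, …, μ^{[r]}`, the sets `S_i` are pairwise
disjoint and there is a unique partition `μ` with `B(μ) = S₁ ⊔ ⋯ ⊔ S_r`; moreover,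
every partition arises from exactly one such tuple `(b₁,…,b_r; μ^{[1]},…,μ^{[r]})`. -/
theorem stmt10 (r : ℕ) (hr : 1 ≤ r) :
    (∀ (b : Fin r → ℤ), (∑ i, b i) = 0 → ∀ μs : Fin r → Ptn,
      (∀ i i' : Fin r, i ≠ i' → Disjoint (blendSet r b μs i) (blendSet r b μs i'))
      ∧ (∃! μ : Ptn, μ.betaSet = ⋃ i, blendSet r b μs i))
    ∧ (∀ ν : Ptn, ∃! p : (Fin r → ℤ) × (Fin r → Ptn),
        (∑ i, p.1 i) = 0 ∧ ν.betaSet = ⋃ i, blendSet r p.1 p.2 i) := by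
  refine ⟨fun b hb μs => ⟨fun i i' hii' => ?_, ?_⟩, fun ν => ?_⟩
  · rw [blendSet_eq_image, blendSet_eq_image]
    exact disjoint_image_blendMap hii' _ _
  · simp only [blendSet_eq_image]
    obtain ⟨ν, c, hν⟩ := (IsMayaDiagram.iUnion_image_blendMap hr
      fun i => (μs i).isMayaDiagram_range_beta (b i - 1)).exists_range_beta_eq
    have hc : c = 0 := by
      simp [charge_iUnion_image_blendMap hr hν, Finset.sum_sub_distrib, hb]
    subst hc
    refine ⟨ν, ν.betaSet_eq_range_beta.trans hν, fun μ (hμ : μ.betaSet = _) => ?_⟩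
    rw [μ.betaSet_eq_range_beta, ← hν] at hμ
    exact (Ptn.range_beta_inj hμ).1
  · choose μ c hμ using fun i =>
      (ν.isMayaDiagram_betaSet.preimage_blendMap i).exists_range_beta_eq
    have hν : ν.betaSet = ⋃ i, blendMap r i '' range ((μ i).beta (c i)) :=
      (eq_iUnion_image_blendMap_iff hr).mpr fun i => (hμ i).symm
    refine ⟨(fun i => c i + 1, μ), ⟨?_, by simpa [blendSet_eq_image] using hν⟩, ?_⟩
    · have := charge_iUnion_image_blendMap hr (ν.betaSet_eq_range_beta ▸ hν)
      simp only [Finset.sum_add_distrib, Finset.sum_const, Finset.card_univ, Fintype.card_fin,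
        nsmul_eq_mul, mul_one]
      linarith
    · rintro ⟨b', μ'⟩ ⟨-, hν'⟩
      simp only [blendSet_eq_image] at hν'
      have h (i : Fin r) := Ptn.range_beta_inj
        (((eq_iUnion_image_blendMap_iff hr).mp hν' i).symm.trans (hμ i).symm)
      refine Prod.ext (funext fun i => ?_) (funext fun i => (h i).1)
      linarith [(h i).2]
end
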